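/- Let M(λ) ∈ F[λ]^{m×(m+n)} be a polynomial matrix of degree at most d with full-Sylvester-rank and let k' = ⌈md/n⌉. Then the degree of any minimal basis dual to M(λ) is equal to k'; equivalently, the maximum right minimal index of M(λ) equals k'. -/

import Mathlib

open Polynomial Matrix

noncomputable section

variable {F : Type*} [Field F]

/-- The rows of a polynomial matrix, viewed as vectors of rational functions. -/
def ratRow {p q : ℕ} (M : Matrix (Fin p) (Fin q) F[X]) (i : Fin p) :
    Fin q → RatFunc F :=
  fun j => algebraMap F[X] (RatFunc F) (M i j)

/-- The rational vector subspace spanned by the rows of a polynomial matrix. -/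
def rowSpan {p q : ℕ} (M : Matrix (Fin p) (Fin q) F[X]) :
    Submodule (RatFunc F) (Fin q → RatFunc F) :=
  Submodule.span (RatFunc F) (Set.range (ratRow M))

/-- The degree of the `i`-th row of a polynomial matrix. -/
def rowDeg {p q : ℕ} (M : Matrix (Fin p) (Fin q) F[X]) (i : Fin p) : ℕ :=
  Finset.univ.sup fun j => (M i j).natDegree

/-- The rows of `M` form a polynomial basis of the rational subspace `V` whose sum of
row degrees is minimal among all polynomial bases of `V`. -/
def IsMinimalBasisOf {p q : ℕ} (V : Submodule (RatFunc F) (Fin q → RatFunc F))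
    (M : Matrix (Fin p) (Fin q) F[X]) : Prop :=
  LinearIndependent (RatFunc F) (ratRow M) ∧ rowSpan M = V ∧
    ∀ M' : Matrix (Fin p) (Fin q) F[X],
      LinearIndependent (RatFunc F) (ratRow M') → rowSpan M' = V →
        ∑ i, rowDeg M i ≤ ∑ i, rowDeg M' i

/-- A polynomial matrix is a minimal basis if its rows form a minimal basis of the
rational subspace they span. -/
def IsMinimalBasis {p q : ℕ} (M : Matrix (Fin p) (Fin q) F[X]) : Prop :=
  IsMinimalBasisOf (rowSpan M) M

/-- A polynomial matrix viewed as a matrix of rational functions. -/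
def ratMat {p q : ℕ} (M : Matrix (Fin p) (Fin q) F[X]) :
    Matrix (Fin p) (Fin q) (RatFunc F) :=
  M.map (algebraMap F[X] (RatFunc F))

/-- The right null-space over `F(λ)` of a polynomial matrix. -/
def rightNullSpace {p q : ℕ} (M : Matrix (Fin p) (Fin q) F[X]) :
    Submodule (RatFunc F) (Fin q → RatFunc F) :=
  LinearMap.ker (Matrix.mulVecLin (ratMat M))

/-- The `k`-th Sylvester matrix of a polynomial matrix regarded as having degree at
most `e`: the block-Toeplitz matrix with `k` block columns whose `j`-th block column
carries the coefficients `M_0, …, M_e` in block rows `j, …, j+e` and zeros elsewhere. -/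
def sylv {p q : ℕ} (e k : ℕ) (M : Matrix (Fin p) (Fin q) F[X]) :
    Matrix (Fin (k + e) × Fin p) (Fin k × Fin q) F :=
  fun r c =>
    if (c.1 : ℕ) ≤ (r.1 : ℕ) ∧ (r.1 : ℕ) ≤ (c.1 : ℕ) + e then
      (M r.2 c.2).coeff ((r.1 : ℕ) - (c.1 : ℕ))
    else 0

/-- `M`, regarded as a polynomial matrix of degree at most `e`, has
full-Sylvester-rank if every Sylvester matrix `S_k`, `k ≥ 1`, has full rank. -/
def HasFullSylvesterRank {p q : ℕ} (e : ℕ) (M : Matrix (Fin p) (Fin q) F[X]) : Prop :=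
  ∀ k : ℕ, 1 ≤ k → (sylv e k M).rank = min ((k + e) * p) (k * q)

/-- The `k`-th coefficient matrix of a polynomial matrix. -/
def coeffMat {p q : ℕ} (k : ℕ) (M : Matrix (Fin p) (Fin q) F[X]) :
    Matrix (Fin p) (Fin q) F :=
  fun i j => (M i j).coeff k

/-- The highest-row-degree coefficient matrix: its `i`-th row is the coefficient of
`λ^{d_i}` in the `i`-th row of `M`, where `d_i` is the `i`-th row degree. -/
def highRowMat {p q : ℕ} (M : Matrix (Fin p) (Fin q) F[X]) :
    Matrix (Fin p) (Fin q) F :=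
  fun i j => (M i j).coeff (rowDeg M i)

/-- The `e`-reversal of a polynomial matrix: `rev_e P(λ) = λ^e P(1/λ)`. -/
def revMat {p q : ℕ} (e : ℕ) (P : Matrix (Fin p) (Fin q) F[X]) :
    Matrix (Fin p) (Fin q) F[X] :=
  fun i j => (P i j).reflect e

/-!
Let `K_k = kerDegreeLT M k` be the `F`-space of polynomial kernel vectors of `M` of degree `< k`.
The Sylvester matrix `S_k` is the matrix of `v ↦ M v` on coefficient vectors, so
full-Sylvester-rank gives `dim K_k = (k n - d m)₊`. If `u_1, …, u_t` are `F(λ)`-independent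
kernel vectors of degrees `ε_i`, the shifts `λ^s u_i` with `s < k - ε_i` are independent in `K_k`,
so `∑ (k - ε_i)₊ ≤ (k n - d m)₊` for every `k`; for large `k` this bounds the dimension of the
rational null space by `n`. Conversely, with `d m = n q + r`, lifting a basis of the degree-`q+1`
top coefficients of `K_{q+2}` adapted to those of `K_{q+1}` gives a polynomial basis of the null
space of degree sum `d m`, so every minimal basis has `∑ ε_i ≤ d m`. For `k = ⌈d m / n⌉` the two
inequalities leave only `max ε_i = k`.
-/

lemma ceil_div_mul_bounds {a b : ℕ} (hb : 0 < b) :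
    a ≤ ⌈(a : ℚ) / b⌉₊ * b ∧ ⌈(a : ℚ) / b⌉₊ * b < a + b := by
  have hbQ : (0 : ℚ) < b := by exact_mod_cast hb
  constructor
  · have := Nat.le_ceil ((a : ℚ) / b)
    rw [div_le_iff₀ hbQ] at this
    exact_mod_cast this
  · have := Nat.ceil_lt_add_one (div_nonneg (Nat.cast_nonneg a) hbQ.le)
    rw [← sub_lt_iff_lt_add, lt_div_iff₀ hbQ] at this
    have : (⌈(a : ℚ) / b⌉₊ * b : ℚ) < a + b := by linarith
    exact_mod_cast this

lemma sup_eq_of_sum_le_of_sum_tsub_le {ι : Type*} [Fintype ι] [Nonempty ι] {ε : ι → ℕ}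
    {c k : ℕ} (hsum : ∑ i, ε i ≤ c) (hshift : ∑ i, (k - ε i) ≤ k * Fintype.card ι - c)
    (hc : c ≤ k * Fintype.card ι) (hlt : k * Fintype.card ι < c + Fintype.card ι) :
    Finset.univ.sup ε = k := by
  have hle : ∀ i, ε i ≤ k := by
    by_contra! ⟨j, hj⟩
    have : ∑ _i : ι, k < ∑ i, ((k - ε i) + ε i) :=
      Finset.sum_lt_sum (fun i _ => by omega) ⟨j, Finset.mem_univ _, by omega⟩
    rw [Finset.sum_add_distrib, Finset.sum_const, Finset.card_univ, smul_eq_mul,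
      Nat.mul_comm] at this
    omega
  refine le_antisymm (Finset.sup_le fun i _ => hle i) ?_
  by_contra! hsup
  have : ∑ i, ε i + Fintype.card ι ≤ k * Fintype.card ι := by
    calc ∑ i, ε i + Fintype.card ι = ∑ i, (ε i + 1) := by
          rw [Finset.sum_add_distrib, Finset.sum_const, Finset.card_univ, smul_eq_mul, mul_one]
      _ ≤ ∑ _i : ι, k := Finset.sum_le_sum fun i _ =>
          (Finset.le_sup (f := ε) (Finset.mem_univ i)).trans_lt hsup
      _ = k * Fintype.card ι := by simp [mul_comm]
  rw [Finset.sum_tsub_distrib _ fun i _ => hle i, Finset.sum_const, Finset.card_univ,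
    smul_eq_mul, Nat.mul_comm] at hshift
  omega

lemma sum_fin_ite_lt_sub {n r : ℕ} (h : r ≤ n) (a : ℕ) :
    ∑ i : Fin n, (if (i : ℕ) < n - r then a else a + 1) = n * a + r := by
  have hcard := Finset.card_filter_add_card_filter_not (s := (Finset.univ : Finset (Fin n)))
    fun i => (i : ℕ) < n - r
  rw [Fin.card_filter_val_lt, Finset.card_univ, Fintype.card_fin] at hcard
  rw [Finset.sum_ite, Finset.sum_const, Finset.sum_const, smul_eq_mul, smul_eq_mul,
    Fin.card_filter_val_lt,
    show (Finset.univ.filter fun i : Fin n => ¬ (i : ℕ) < n - r).card = r by omega]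
  obtain ⟨s, rfl⟩ : ∃ s, n = s + r := ⟨n - r, by omega⟩
  rw [Nat.add_sub_cancel, min_eq_right (Nat.le_add_right s r)]
  ring

lemma exists_linearIndependent_of_le {V : Type*} [AddCommGroup V] [Module F V]
    {W₁ W₂ : Submodule F V} (hle : W₁ ≤ W₂) [FiniteDimensional F W₂] {t : ℕ}
    (ht : Module.finrank F W₂ = t) :
    ∃ τ : Fin t → V, LinearIndependent F τ ∧ (∀ i, τ i ∈ W₂) ∧
      ∀ i : Fin t, (i : ℕ) < Module.finrank F W₁ → τ i ∈ W₁ := by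
  subst ht
  suffices h : ∀ j, Module.finrank F W₁ ≤ j → j ≤ Module.finrank F W₂ →
      ∃ v : Fin j → W₂, LinearIndependent F v ∧
        ∀ i : Fin j, (i : ℕ) < Module.finrank F W₁ → (v i : V) ∈ W₁ by
    obtain ⟨v, hv, hvW₁⟩ := h _ (Submodule.finrank_mono hle) le_rfl
    exact ⟨fun i => v i, hv.map' W₂.subtype W₂.ker_subtype, fun i => (v i).2, hvW₁⟩
  have := Submodule.finiteDimensional_of_le hle
  intro j hj
  induction j, hj using Nat.le_induction with
  | base =>
    intro _
    let b := Module.finBasis F W₁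
    refine ⟨Submodule.inclusion hle ∘ b, ?_, fun i _ => (b i).2⟩
    exact b.linearIndependent.map' _ (Submodule.ker_inclusion _ _ hle)
  | succ j _ ih =>
    intro hj
    obtain ⟨v, hv, hvW₁⟩ := ih (Nat.le_of_succ_le hj)
    obtain ⟨x, hx⟩ := exists_linearIndependent_snoc_of_lt_finrank hv hj
    refine ⟨Fin.snoc v x, hx, fun i hi => ?_⟩
    have hij : (i : ℕ) < j := by omega
    change ((Fin.snoc (α := fun _ => W₂) v x (Fin.castSucc ⟨i, hij⟩)) : V) ∈ W₁
    rw [Fin.snoc_castSucc]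
    exact hvW₁ _ hi

lemma mem_degreeLT_succ_and_coeff_eq_zero_iff {R : Type*} [Semiring R] {k : ℕ} {f : R[X]} :
    f ∈ degreeLT R (k + 1) ∧ f.coeff k = 0 ↔ f ∈ degreeLT R k := by
  simp only [mem_degreeLT, degree_lt_iff_coeff_zero]
  constructor
  · rintro ⟨h, hk⟩ t ht
    rcases (show k = t ∨ k + 1 ≤ t by exact_mod_cast ht.eq_or_lt) with rfl | ht
    · exact hk
    · exact h t (by exact_mod_cast ht)
  · intro h
    exact ⟨fun t ht => h t (le_trans (by exact_mod_cast Nat.le_succ k) ht), h k le_rfl⟩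

lemma linearIndependent_X_pow_smul {R ι V : Type*} [Semiring R] [AddCommMonoid V] [Module R[X] V]
    [Module R V] [IsScalarTower R R[X] V] {u : ι → V} (hu : LinearIndependent R[X] u) :
    LinearIndependent R fun a : ℕ × ι => (X : R[X]) ^ a.1 • u a.2 := by
  refine linearIndependent_smul ?_ hu
  convert (basisMonomials R).linearIndependent
  funext s
  simp [X_pow_eq_monomial]

lemma linearIndependent_of_linearIndependent_coeff {R ι : Type*} [CommRing R] [Fintype ι]
    {q : ℕ} {u : ι → Fin q → R[X]} {D : ι → ℕ} (hdeg : ∀ i j, (u i j).natDegree ≤ D i)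
    (hτ : LinearIndependent R fun i j => (u i j).coeff (D i)) :
    LinearIndependent R[X] u := by
  classical
  rw [Fintype.linearIndependent_iff]
  intro g hg
  by_contra! hne
  let S := Finset.univ.filter fun i => g i ≠ 0
  obtain ⟨i₀, hi₀, hmax⟩ := S.exists_max_image (fun i => (g i).natDegree + D i)
    (let ⟨i, hi⟩ := hne; ⟨i, by simpa [S] using hi⟩)
  set s := (g i₀).natDegree + D i₀
  -- The coefficient of `λ^s` in `∑ g i • u i` only sees the leading terms reaching degree `s`.
  have hterm : ∀ i j, (g i * u i j).coeff s = (g i).coeff (s - D i) * (u i j).coeff (D i) := by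
    intro i j
    by_cases hgi : g i = 0
    · simp [hgi]
    have hle : (g i).natDegree + D i ≤ s := hmax i (by simpa [S] using hgi)
    rw [show s = (s - D i) + D i by omega,
      coeff_mul_add_eq_of_natDegree_le (by omega) (hdeg i j), Nat.add_sub_cancel]
  have hsum : ∑ i, (g i).coeff (s - D i) • (fun j => (u i j).coeff (D i)) = 0 := by
    funext j
    have := congr_arg (fun v => (v j).coeff s) hg
    simpa [finsetSum_coeff, hterm] using this
  have := Fintype.linearIndependent_iff.1 hτ _ hsum i₀
  rw [Nat.add_sub_cancel, coeff_natDegree, leadingCoeff_eq_zero] at this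
  exact (by simpa [S] using hi₀ : g i₀ ≠ 0) this

def polyOfCoeffs (k q : ℕ) : (Fin k × Fin q → F) →ₗ[F] Fin q → F[X] :=
  LinearMap.pi fun j => ∑ s : Fin k, (monomial (s : ℕ)).comp (LinearMap.proj (s, j))

lemma polyOfCoeffs_apply {k q : ℕ} (x : Fin k × Fin q → F) (j : Fin q) :
    polyOfCoeffs k q x j = ∑ s : Fin k, monomial (s : ℕ) (x (s, j)) := by
  simp [polyOfCoeffs]

lemma coeff_polyOfCoeffs {k q : ℕ} (x : Fin k × Fin q → F) (j : Fin q) (t : ℕ) :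
    (polyOfCoeffs k q x j).coeff t = if h : t < k then x (⟨t, h⟩, j) else 0 := by
  rw [polyOfCoeffs_apply, finsetSum_coeff]
  simp only [coeff_monomial]
  split_ifs with h
  · rw [Finset.sum_eq_single ⟨t, h⟩ (fun s _ hs => if_neg fun h' => hs (Fin.ext h'))
      (by simp), if_pos rfl]
  · exact Finset.sum_eq_zero fun s _ => if_neg (by have := s.2; omega)

lemma polyOfCoeffs_injective (k q : ℕ) : Function.Injective (polyOfCoeffs (F := F) k q) := by
  intro x y hxy
  funext ⟨s, j⟩
  simpa [coeff_polyOfCoeffs] using congr_arg (fun v => (v j).coeff s) hxy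

lemma polyOfCoeffs_mem_degreeLT {k q : ℕ} (x : Fin k × Fin q → F) (j : Fin q) :
    polyOfCoeffs k q x j ∈ degreeLT F k := by
  rw [mem_degreeLT, degree_lt_iff_coeff_zero]
  intro t ht
  rw [coeff_polyOfCoeffs, dif_neg (by omega)]

lemma polyOfCoeffs_coeff {k q : ℕ} {v : Fin q → F[X]} (hv : ∀ j, v j ∈ degreeLT F k) :
    polyOfCoeffs k q (fun sj => (v sj.2).coeff sj.1) = v := by
  funext j
  ext t
  rw [coeff_polyOfCoeffs]
  split_ifs with h
  · rfl
  · exact (coeff_eq_zero_of_degree_lt ((mem_degreeLT.1 (hv j)).trans_le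
      (by exact_mod_cast not_lt.1 h))).symm

lemma mulVec_polyOfCoeffs {p q d k : ℕ} {M : Matrix (Fin p) (Fin q) F[X]}
    (hdeg : ∀ i j, (M i j).natDegree ≤ d) (x : Fin k × Fin q → F) :
    M *ᵥ polyOfCoeffs k q x = polyOfCoeffs (k + d) p (sylv d k M *ᵥ x) := by
  funext i
  ext t
  have hcoeff : ∀ (s : Fin k) j, (M i j * monomial (s : ℕ) (x (s, j))).coeff t =
      if (s : ℕ) ≤ t ∧ t ≤ s + d then (M i j).coeff (t - s) * x (s, j) else 0 := by
    intro s j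
    rw [← C_mul_X_pow_eq_monomial, ← mul_assoc, coeff_mul_X_pow', coeff_mul_C]
    by_cases h : (s : ℕ) ≤ t ∧ t ≤ s + d
    · simp [h]
    · split_ifs with h'
      · rw [coeff_eq_zero_of_natDegree_lt ((hdeg i j).trans_lt (by omega)), zero_mul]
      · rfl
  rw [coeff_polyOfCoeffs]
  simp only [mulVec, dotProduct, polyOfCoeffs_apply, Finset.mul_sum, finsetSum_coeff, hcoeff]
  split_ifs with h
  · simp only [sylv, Fintype.sum_prod_type, ite_mul, zero_mul]
    rw [Finset.sum_comm]
  · refine Finset.sum_eq_zero fun j _ => Finset.sum_eq_zero fun s _ => if_neg (by omega)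

def kerDegreeLT {p q : ℕ} (M : Matrix (Fin p) (Fin q) F[X]) (k : ℕ) :
    Submodule F (Fin q → F[X]) :=
  Submodule.pi Set.univ (fun _ => degreeLT F k) ⊓
    LinearMap.ker (M.mulVecLin.restrictScalars F)

section kerDegreeLT

variable {p q : ℕ} {M : Matrix (Fin p) (Fin q) F[X]}

lemma mem_kerDegreeLT {k : ℕ} {v : Fin q → F[X]} :
    v ∈ kerDegreeLT M k ↔ (∀ j, v j ∈ degreeLT F k) ∧ M *ᵥ v = 0 := by
  simp [kerDegreeLT, Submodule.mem_pi]

lemma kerDegreeLT_le_range_polyOfCoeffs (k : ℕ) :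
    kerDegreeLT M k ≤ LinearMap.range (polyOfCoeffs k q) :=
  fun _ hv => ⟨_, polyOfCoeffs_coeff (mem_kerDegreeLT.1 hv).1⟩

instance (k : ℕ) : FiniteDimensional F (kerDegreeLT M k) :=
  Submodule.finiteDimensional_of_le (kerDegreeLT_le_range_polyOfCoeffs k)

lemma kerDegreeLT_mono {k l : ℕ} (h : k ≤ l) : kerDegreeLT M k ≤ kerDegreeLT M l := by
  intro v hv
  rw [mem_kerDegreeLT] at hv ⊢
  exact ⟨fun j => degreeLT_mono h (hv.1 j), hv.2⟩

lemma map_polyOfCoeffs_ker_sylv {d : ℕ} (hdeg : ∀ i j, (M i j).natDegree ≤ d) (k : ℕ) :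
    (LinearMap.ker (sylv d k M).mulVecLin).map (polyOfCoeffs k q) = kerDegreeLT M k := by
  have hker : ∀ x, x ∈ LinearMap.ker (sylv d k M).mulVecLin ↔
      M *ᵥ polyOfCoeffs k q x = 0 := by
    intro x
    rw [mulVec_polyOfCoeffs hdeg, ← map_zero (polyOfCoeffs (k + d) p),
      (polyOfCoeffs_injective _ _).eq_iff]
    rfl
  apply le_antisymm
  · rintro _ ⟨x, hx, rfl⟩
    exact mem_kerDegreeLT.2 ⟨polyOfCoeffs_mem_degreeLT x, (hker x).1 hx⟩
  · intro _ hv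
    obtain ⟨x, rfl⟩ := kerDegreeLT_le_range_polyOfCoeffs k hv
    exact ⟨x, (hker x).2 (mem_kerDegreeLT.1 hv).2, rfl⟩

lemma finrank_kerDegreeLT {d : ℕ} (hdeg : ∀ i j, (M i j).natDegree ≤ d) (k : ℕ) :
    Module.finrank F (kerDegreeLT M k) = k * q - (sylv d k M).rank := by
  have hrank := LinearMap.finrank_range_add_finrank_ker (sylv d k M).mulVecLin
  rw [Module.finrank_fintype_fun_eq_card, Fintype.card_prod, Fintype.card_fin,
    Fintype.card_fin] at hrank
  rw [← map_polyOfCoeffs_ker_sylv hdeg,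
    ← (Submodule.equivMapOfInjective _ (polyOfCoeffs_injective k q) _).finrank_eq]
  exact Nat.eq_sub_of_add_eq' hrank

/-- The shifts `λ^s u_i`, `s < k - ε_i`, are `F`-independent elements of `kerDegreeLT M k`. -/
lemma sum_tsub_le_finrank_kerDegreeLT {ι : Type*} [Fintype ι] {u : ι → Fin q → F[X]}
    (hu : LinearIndependent F[X] u) (hker : ∀ i, M *ᵥ u i = 0) {ε : ι → ℕ}
    (hε : ∀ i j, (u i j).natDegree ≤ ε i) (k : ℕ) :
    ∑ i, (k - ε i) ≤ Module.finrank F (kerDegreeLT M k) := by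
  let shift : (Σ i, Fin (k - ε i)) → Fin q → F[X] := fun a =>
    (X : F[X]) ^ (a.2 : ℕ) • u a.1
  have hmem : ∀ a, shift a ∈ kerDegreeLT M k := by
    rintro ⟨i, s⟩
    refine mem_kerDegreeLT.2 ⟨fun j => ?_, by simp only [shift, mulVec_smul, hker, smul_zero]⟩
    simp only [shift, Pi.smul_apply, smul_eq_mul]
    have hdeg : (X ^ (s : ℕ) * u i j).natDegree < k := by
      have hmul := natDegree_mul_le (p := X ^ (s : ℕ)) (q := u i j)
      rw [natDegree_X_pow] at hmul
      have := hε i j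
      have := s.2
      omega
    exact mem_degreeLT.2 (degree_le_natDegree.trans_lt (by exact_mod_cast hdeg))
  have hind : LinearIndependent F shift := by
    have hinj : Function.Injective fun a : (Σ i, Fin (k - ε i)) => ((a.2 : ℕ), a.1) := by
      rintro ⟨i, s⟩ ⟨i', s'⟩ h
      simp only [Prod.mk.injEq] at h
      obtain ⟨hs, rfl⟩ := h
      rw [Fin.ext hs]
    exact ((linearIndependent_X_pow_smul (R := F) hu).comp _ hinj :)
  calc ∑ i, (k - ε i) = Module.finrank F (Submodule.span F (Set.range shift)) := by
        rw [finrank_span_eq_card hind, Fintype.card_sigma]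
        simp
    _ ≤ Module.finrank F (kerDegreeLT M k) :=
        Submodule.finrank_mono (Submodule.span_le.2 (Set.range_subset_iff.2 hmem))

end kerDegreeLT

lemma finrank_kerDegreeLT_of_hasFullSylvesterRank {m n d : ℕ}
    {M : Matrix (Fin m) (Fin (m + n)) F[X]} (hdeg : ∀ i j, (M i j).natDegree ≤ d)
    (hfull : HasFullSylvesterRank d M) (k : ℕ) :
    Module.finrank F (kerDegreeLT M k) = k * n - d * m := by
  rw [finrank_kerDegreeLT hdeg]
  rcases Nat.eq_zero_or_pos k with rfl | hk
  · simp
  · rw [hfull k hk]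
    grind

lemma natDegree_le_rowDeg {p q : ℕ} (N : Matrix (Fin p) (Fin q) F[X]) (i : Fin p) (j : Fin q) :
    (N i j).natDegree ≤ rowDeg N i :=
  Finset.le_sup (f := fun j => (N i j).natDegree) (Finset.mem_univ j)

lemma linearIndependent_ratRow_iff {p q : ℕ} (N : Matrix (Fin p) (Fin q) F[X]) :
    LinearIndependent (RatFunc F) (ratRow N) ↔ LinearIndependent F[X] fun i => N i := by
  rw [← LinearIndependent.iff_fractionRing F[X] (RatFunc F),
    ← LinearMap.linearIndependent_iff ((Algebra.linearMap F[X] (RatFunc F)).compLeft (Fin q))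
      (LinearMap.ker_eq_bot.2 fun _ _ h => funext fun j =>
        RatFunc.algebraMap_injective F (congr_fun h j))]
  rfl

lemma ratRow_mem_rightNullSpace_iff {p q r : ℕ} (M : Matrix (Fin p) (Fin q) F[X])
    (N : Matrix (Fin r) (Fin q) F[X]) (i : Fin r) :
    ratRow N i ∈ rightNullSpace M ↔ M *ᵥ N i = 0 := by
  have hmap : ratMat M *ᵥ ratRow N i = algebraMap F[X] (RatFunc F) ∘ (M *ᵥ N i) :=
    funext fun i' => ((algebraMap F[X] (RatFunc F)).map_mulVec M (N i) i').symm
  rw [rightNullSpace, LinearMap.mem_ker, mulVecLin_apply, hmap]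
  constructor
  · intro h
    funext i'
    exact RatFunc.algebraMap_injective F (by simpa using congr_fun h i')
  · intro h
    simp [h]

lemma exists_linearIndependent_ratRow_mem {q : ℕ}
    (V : Submodule (RatFunc F) (Fin q → RatFunc F)) :
    ∃ u : Matrix (Fin (Module.finrank (RatFunc F) V)) (Fin q) F[X],
      LinearIndependent (RatFunc F) (ratRow u) ∧ ∀ i, ratRow u i ∈ V := by
  let b := Module.finBasis (RatFunc F) V
  obtain ⟨c, hc⟩ := IsLocalization.exist_integer_multiples (nonZeroDivisors F[X]) Finset.univ
    fun ij : Fin (Module.finrank (RatFunc F) V) × Fin q => (b ij.1 : Fin q → RatFunc F) ij.2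
  choose u hu using fun ij => hc ij (Finset.mem_univ _)
  have hc0 : algebraMap F[X] (RatFunc F) c ≠ 0 :=
    (map_ne_zero_iff _ (RatFunc.algebraMap_injective F)).2 (nonZeroDivisors.coe_ne_zero c)
  have hrow : ∀ i, ratRow (fun i j => u (i, j)) i
      = Units.mk0 _ hc0 • (b i : Fin q → RatFunc F) := by
    intro i
    funext j
    simp only [ratRow, Units.smul_mk0, Pi.smul_apply, smul_eq_mul]
    rw [hu (i, j), Algebra.smul_def]
  refine ⟨fun i j => u (i, j), ?_, fun i => hrow i ▸ V.smul_mem _ (b i).2⟩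
  have hb := (b.linearIndependent.map' V.subtype V.ker_subtype).units_smul
    fun _ => Units.mk0 _ hc0
  rwa [show ratRow (fun i j => u (i, j)) = _ from funext hrow]

lemma finrank_rightNullSpace_le {m n d : ℕ} {M : Matrix (Fin m) (Fin (m + n)) F[X]}
    (hdeg : ∀ i j, (M i j).natDegree ≤ d) (hfull : HasFullSylvesterRank d M) :
    Module.finrank (RatFunc F) (rightNullSpace M) ≤ n := by
  obtain ⟨u, hind, hker⟩ := exists_linearIndependent_ratRow_mem (rightNullSpace M)
  set E := Finset.univ.sup (rowDeg u)
  have hshift := sum_tsub_le_finrank_kerDegreeLT ((linearIndependent_ratRow_iff u).1 hind)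
    (fun i => (ratRow_mem_rightNullSpace_iff M u i).1 (hker i)) (ε := fun _ => E)
    (fun i j => (natDegree_le_rowDeg u i j).trans (Finset.le_sup (Finset.mem_univ i)))
    ((n + 1) * E + 1)
  rw [finrank_kerDegreeLT_of_hasFullSylvesterRank hdeg hfull] at hshift
  simp only [Finset.sum_const, Finset.card_univ, Fintype.card_fin, smul_eq_mul] at hshift
  -- For `t` rows of degree `≤ E` and `k = (n + 1) E + 1`, the bound `t (k - E) ≤ k n` forces
  -- `t ≤ n`.
  have hle : Module.finrank (RatFunc F) (rightNullSpace M) * (n * E + 1)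
      ≤ n * (n * E + 1) + n * E := by
    calc _ = Module.finrank (RatFunc F) (rightNullSpace M) * ((n + 1) * E + 1 - E) := by
          congr 1; grind
      _ ≤ ((n + 1) * E + 1) * n := hshift.trans (Nat.sub_le _ _)
      _ = n * (n * E + 1) + n * E := by ring
  by_contra! h
  nlinarith [Nat.mul_le_mul_right (n * E + 1) h]

lemma rowSpan_eq_rightNullSpace {m n d : ℕ} {M : Matrix (Fin m) (Fin (m + n)) F[X]}
    (hdeg : ∀ i j, (M i j).natDegree ≤ d) (hfull : HasFullSylvesterRank d M)
    {N : Matrix (Fin n) (Fin (m + n)) F[X]} (hind : LinearIndependent (RatFunc F) (ratRow N))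
    (hker : ∀ i, M *ᵥ N i = 0) :
    rowSpan N = rightNullSpace M := by
  refine Submodule.eq_of_le_of_finrank_le (Submodule.span_le.2 (Set.range_subset_iff.2
    fun i => (ratRow_mem_rightNullSpace_iff M N i).2 (hker i))) ?_
  rw [rowSpan, finrank_span_eq_card hind, Fintype.card_fin]
  exact finrank_rightNullSpace_le hdeg hfull

def leadCoeffSpace {p q : ℕ} (M : Matrix (Fin p) (Fin q) F[X]) (k : ℕ) :
    Submodule F (Fin q → F) :=
  (kerDegreeLT M (k + 1)).map (LinearMap.pi fun j => (lcoeff F k).comp (LinearMap.proj j))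

section leadCoeffSpace

variable {p q : ℕ} {M : Matrix (Fin p) (Fin q) F[X]}

lemma mem_leadCoeffSpace {k : ℕ} {τ : Fin q → F} :
    τ ∈ leadCoeffSpace M k ↔ ∃ v ∈ kerDegreeLT M (k + 1), ∀ j, (v j).coeff k = τ j := by
  simp [leadCoeffSpace, funext_iff]

lemma leadCoeffSpace_le_succ (k : ℕ) : leadCoeffSpace M k ≤ leadCoeffSpace M (k + 1) := by
  intro τ hτ
  obtain ⟨v, hv, hvτ⟩ := mem_leadCoeffSpace.1 hτ
  refine mem_leadCoeffSpace.2 ⟨(X : F[X]) • v, mem_kerDegreeLT.2 ⟨fun j => ?_, ?_⟩, ?_⟩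
  · rw [Pi.smul_apply, smul_eq_mul, mem_degreeLT, degree_lt_iff_coeff_zero]
    intro t ht
    obtain ⟨t, rfl⟩ : ∃ t', t = t' + 1 := ⟨t - 1, by omega⟩
    rw [coeff_X_mul]
    exact coeff_eq_zero_of_degree_lt
      ((mem_degreeLT.1 ((mem_kerDegreeLT.1 hv).1 j)).trans_le (by exact_mod_cast by omega))
  · rw [mulVec_smul, (mem_kerDegreeLT.1 hv).2, smul_zero]
  · simpa using hvτ

lemma finrank_leadCoeffSpace_add (k : ℕ) :
    Module.finrank F (leadCoeffSpace M k) + Module.finrank F (kerDegreeLT M k) =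
      Module.finrank F (kerDegreeLT M (k + 1)) := by
  let f := (LinearMap.pi fun j => (lcoeff F k).comp (LinearMap.proj j)).comp
    (kerDegreeLT M (k + 1)).subtype
  have hrange : LinearMap.range f = leadCoeffSpace M k := by
    rw [LinearMap.range_comp, Submodule.range_subtype]
    rfl
  have hker : LinearMap.ker f = (kerDegreeLT M k).comap (kerDegreeLT M (k + 1)).subtype := by
    ext ⟨v, hv⟩
    obtain ⟨hdeg, hMv⟩ := mem_kerDegreeLT.1 hv
    simp [f, funext_iff, mem_kerDegreeLT, ← mem_degreeLT_succ_and_coeff_eq_zero_iff, hdeg, hMv]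
  rw [← hrange, ← LinearMap.finrank_range_add_finrank_ker f, hker,
    (Submodule.comapSubtypeEquivOfLe (kerDegreeLT_mono (Nat.le_succ k))).finrank_eq]

end leadCoeffSpace

/-- Write `d m = n q + r` with `r < n`. Lifting a basis of `leadCoeffSpace M (q + 1)` whose first
`n - r` vectors lie in `leadCoeffSpace M q` gives `n - r` kernel vectors of degree `q` and `r` of
degree `q + 1`. -/
lemma exists_kernel_basis_sum_rowDeg_le {m n d : ℕ} (hn : 0 < n)
    {M : Matrix (Fin m) (Fin (m + n)) F[X]} (hdeg : ∀ i j, (M i j).natDegree ≤ d)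
    (hfull : HasFullSylvesterRank d M) :
    ∃ N : Matrix (Fin n) (Fin (m + n)) F[X], LinearIndependent F[X] (fun i => N i) ∧
      (∀ i, M *ᵥ N i = 0) ∧ ∑ i, rowDeg N i ≤ d * m := by
  set q := d * m / n
  set r := d * m % n
  have hdiv : n * q + r = d * m := Nat.div_add_mod _ _
  have hr : r < n := Nat.mod_lt _ hn
  have hdim := finrank_kerDegreeLT_of_hasFullSylvesterRank hdeg hfull
  have hW₁ : Module.finrank F (leadCoeffSpace M q) = n - r := by
    have := finrank_leadCoeffSpace_add (M := M) q
    rw [hdim, hdim] at this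
    grind
  have hW₂ : Module.finrank F (leadCoeffSpace M (q + 1)) = n := by
    have := finrank_leadCoeffSpace_add (M := M) (q + 1)
    rw [hdim, hdim] at this
    grind
  obtain ⟨τ, hτ, hτW₂, hτW₁⟩ :=
    exists_linearIndependent_of_le (leadCoeffSpace_le_succ q) hW₂
  let D : Fin n → ℕ := fun i => if (i : ℕ) < n - r then q else q + 1
  have hτD : ∀ i, τ i ∈ leadCoeffSpace M (D i) := by
    intro i
    by_cases hi : (i : ℕ) < n - r
    · simpa [D, hi] using hτW₁ i (hW₁ ▸ hi)
    · simpa [D, hi] using hτW₂ i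
  choose N hN hNτ using fun i => mem_leadCoeffSpace.1 (hτD i)
  have hNdeg : ∀ i j, (N i j).natDegree ≤ D i := fun i j => natDegree_le_iff_degree_le.2
    (mem_degreeLE.1 (degreeLT_succ_eq_degreeLE (R := F) ▸ (mem_kerDegreeLT.1 (hN i)).1 j))
  refine ⟨N, linearIndependent_of_linearIndependent_coeff hNdeg ?_,
    fun i => (mem_kerDegreeLT.1 (hN i)).2, ?_⟩
  · rwa [show (fun i j => (N i j).coeff (D i)) = τ from funext fun i => funext (hNτ i)]
  · calc ∑ i, rowDeg N i ≤ ∑ i, D i :=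
          Finset.sum_le_sum fun i _ => Finset.sup_le fun j _ => hNdeg i j
      _ = d * m := by rw [sum_fin_ite_lt_sub hr.le, hdiv]

lemma sum_rowDeg_le_of_isMinimalBasisOf {m n d : ℕ} (hn : 0 < n)
    {M : Matrix (Fin m) (Fin (m + n)) F[X]} (hdeg : ∀ i j, (M i j).natDegree ≤ d)
    (hfull : HasFullSylvesterRank d M) {N : Matrix (Fin n) (Fin (m + n)) F[X]}
    (hN : IsMinimalBasisOf (rightNullSpace M) N) :
    ∑ i, rowDeg N i ≤ d * m := by
  obtain ⟨N', hind, hker, hsum⟩ := exists_kernel_basis_sum_rowDeg_le hn hdeg hfull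
  have hind' := (linearIndependent_ratRow_iff N').2 hind
  exact (hN.2.2 N' hind' (rowSpan_eq_rightNullSpace hdeg hfull hind' hker)).trans hsum

theorem degree_dualMinimalBasis_of_hasFullSylvesterRank_general {F : Type*} [Field F]
    {m n d : ℕ} (hn : 0 < n)
    (M : Matrix (Fin m) (Fin (m + n)) F[X]) (hdeg : ∀ i j, (M i j).natDegree ≤ d)
    (hfull : HasFullSylvesterRank d M)
    (k' : ℕ) (hk' : k' = ⌈(m * d : ℚ) / (n : ℚ)⌉₊) :
    (∀ N : Matrix (Fin n) (Fin (m + n)) F[X],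
        IsMinimalBasis N → M * Nᵀ = 0 →
        Finset.univ.sup (fun i => rowDeg N i) = k') ∧
    (∀ N : Matrix (Fin n) (Fin (m + n)) F[X],
        IsMinimalBasisOf (rightNullSpace M) N →
        Finset.univ.sup (fun i => rowDeg N i) = k') := by
  have hk : d * m ≤ k' * n ∧ k' * n < d * m + n := by
    rw [hk', show (m * d : ℚ) = ((d * m : ℕ) : ℚ) by push_cast; ring]
    exact ceil_div_mul_bounds hn
  have hdual : ∀ N : Matrix (Fin n) (Fin (m + n)) F[X],
      IsMinimalBasisOf (rightNullSpace M) N → Finset.univ.sup (fun i => rowDeg N i) = k' := by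
    intro N hN
    have hker : ∀ i, M *ᵥ N i = 0 := fun i =>
      (ratRow_mem_rightNullSpace_iff M N i).1 (hN.2.1 ▸ Submodule.subset_span ⟨i, rfl⟩)
    have hshift := sum_tsub_le_finrank_kerDegreeLT ((linearIndependent_ratRow_iff N).1 hN.1)
      hker (natDegree_le_rowDeg N) k'
    rw [finrank_kerDegreeLT_of_hasFullSylvesterRank hdeg hfull] at hshift
    have : Nonempty (Fin n) := ⟨⟨0, hn⟩⟩
    exact sup_eq_of_sum_le_of_sum_tsub_le (sum_rowDeg_le_of_isMinimalBasisOf hn hdeg hfull hN)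
      (by simpa using hshift) (by simpa using hk.1) (by simpa using hk.2)
  refine ⟨fun N hN hMN => ?_, hdual⟩
  have hspan : rowSpan N = rightNullSpace M := rowSpan_eq_rightNullSpace hdeg hfull hN.1
    fun i => funext fun i' => congr_fun (congr_fun hMN i') i
  exact hdual N ⟨hN.1, hspan, fun N' hN' hN'span => hN.2.2 N' hN' (hN'span.trans hspan.symm)⟩

/-- If `M(λ)` has full-Sylvester-rank, then the degree of any minimal basis dual to
`M(λ)` equals `k' = ⌈md/n⌉`; equivalently, the maximum right minimal index of `M(λ)`
equals `k'`. -/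
theorem degree_dualMinimalBasis_of_hasFullSylvesterRank {F : Type*} [Field F]
    {m n d : ℕ} (hm : 0 < m) (hn : 0 < n) (hd : 0 < d)
    (M : Matrix (Fin m) (Fin (m + n)) F[X]) (hdeg : ∀ i j, (M i j).natDegree ≤ d)
    (hfull : HasFullSylvesterRank d M)
    (k' : ℕ) (hk' : k' = ⌈(m * d : ℚ) / (n : ℚ)⌉₊) :
    (∀ N : Matrix (Fin n) (Fin (m + n)) F[X],
        IsMinimalBasis N → M * Nᵀ = 0 →
        Finset.univ.sup (fun i => rowDeg N i) = k') ∧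
    (∀ N : Matrix (Fin n) (Fin (m + n)) F[X],
        IsMinimalBasisOf (rightNullSpace M) N →
        Finset.univ.sup (fun i => rowDeg N i) = k') :=
  degree_dualMinimalBasis_of_hasFullSylvesterRank_general hn M hdeg hfull k' hk'

end
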